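/- arXiv:2506.16740 — 2 statements merged into one kernel-verified Lean document; each statement's English description precedes it below -/
import Mathlib

section
/- Let X ⊆ ℝ^d be a cone set with d ≥ 1, and fix θ ≠ 0. Suppose that for every pair of functions φ, ψ : X → ℝ that are homogeneous of degree θ and continuous and positive on the unit sphere S_X, there exist constants E, F > 0 with E·ψ(t) ≤ φ(t) ≤ F·ψ(t) for all t ∈ X \ {0}. Then S_X = {x ∈ X : |x| = 1} is compact. -/
/-!
If a unit vector `y ∉ X` lay in the closure of `S = {x ∈ X | ‖x‖ = 1}`, compare `‖x‖ ^ θ` with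
`‖x‖ ^ θ * ‖x / ‖x‖ - y‖`: both are homogeneous of degree `θ`, continuous and positive on `S`, so the
hypothesis gives `1 ≤ F * ‖t - y‖` for every `t ∈ S`, which keeps `S` at distance `F⁻¹` from `y`.
Hence `S` is a closed subset of the unit sphere of `ℝ^d`, and therefore compact.
-/

open NormedSpace

lemma isClosed_setOf_mem_and_norm_eq_one {V : Type*} [SeminormedAddCommGroup V] {X : Set V}
    (hsep : ∀ y ∉ X, ‖y‖ = 1 → ∃ c > 0, ∀ t ∈ X, ‖t‖ = 1 → c ≤ ‖t - y‖) :
    IsClosed {x | x ∈ X ∧ ‖x‖ = 1} := by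
  refine isClosed_of_closure_subset fun y hy => ?_
  have hy1 : ‖y‖ = 1 := by
    have hsub : {x | x ∈ X ∧ ‖x‖ = 1} ⊆ Metric.sphere (0 : V) 1 := fun x hx => by simpa using hx.2
    simpa using Metric.isClosed_sphere.closure_subset_iff.2 hsub hy
  by_contra hyS
  obtain ⟨c, hc, hsepy⟩ := hsep y (fun hyX => hyS ⟨hyX, hy1⟩) hy1
  obtain ⟨t, ⟨htX, ht1⟩, hyt⟩ := Metric.mem_closure_iff.1 hy c hc
  rw [dist_comm, dist_eq_norm] at hyt
  exact (hsepy t htX ht1).not_gt hyt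

lemma continuousOn_norm_rpow {V : Type*} [NormedAddCommGroup V] (θ : ℝ) :
    ContinuousOn (fun x : V => ‖x‖ ^ θ) {x | x ≠ 0} :=
  continuous_norm.continuousOn.rpow_const fun _ hx => Or.inl (norm_ne_zero_iff.2 hx)

section

variable {V : Type*} [NormedAddCommGroup V] [NormedSpace ℝ V]

lemma norm_smul_rpow_of_nonneg {r : ℝ} (hr : 0 ≤ r) (x : V) (θ : ℝ) :
    ‖r • x‖ ^ θ = r ^ θ * ‖x‖ ^ θ := by
  rw [norm_smul, Real.norm_of_nonneg hr, Real.mul_rpow hr (norm_nonneg x)]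

lemma continuousOn_normalize : ContinuousOn (normalize : V → V) {x | x ≠ 0} :=
  (continuous_norm.continuousOn.inv₀ fun _ hx => norm_ne_zero_iff.2 hx).smul continuousOn_id

noncomputable def homogeneousDistTo (θ : ℝ) (y x : V) : ℝ :=
  ‖x‖ ^ θ * ‖normalize x - y‖

lemma homogeneousDistTo_smul_of_pos (θ : ℝ) (y : V) {r : ℝ} (hr : 0 < r) (x : V) :
    homogeneousDistTo θ y (r • x) = r ^ θ * homogeneousDistTo θ y x := by
  rw [homogeneousDistTo, homogeneousDistTo, normalize_smul_of_pos hr,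
    norm_smul_rpow_of_nonneg hr.le, mul_assoc]

lemma homogeneousDistTo_of_norm_eq_one (θ : ℝ) (y : V) {x : V} (hx : ‖x‖ = 1) :
    homogeneousDistTo θ y x = ‖x - y‖ := by
  rw [homogeneousDistTo, normalize_eq_self_of_norm_eq_one hx, hx, Real.one_rpow, one_mul]

lemma continuousOn_homogeneousDistTo (θ : ℝ) (y : V) :
    ContinuousOn (homogeneousDistTo θ y) {x | x ≠ 0} :=
  (continuousOn_norm_rpow θ).mul ((continuousOn_normalize.sub continuousOn_const).norm)

end

theorem stmt1_general (d : ℕ) (X : Set (EuclideanSpace ℝ (Fin d)))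
    (θ : ℝ)
    (hequiv : ∀ φ ψ : EuclideanSpace ℝ (Fin d) → ℝ,
      (∀ r : ℝ, 0 < r → ∀ x ∈ X, φ (r • x) = r ^ θ * φ x) →
      (∀ r : ℝ, 0 < r → ∀ x ∈ X, ψ (r • x) = r ^ θ * ψ x) →
      ContinuousOn φ {x | x ∈ X ∧ ‖x‖ = 1} →
      ContinuousOn ψ {x | x ∈ X ∧ ‖x‖ = 1} →
      (∀ x ∈ X, ‖x‖ = 1 → 0 < φ x) →
      (∀ x ∈ X, ‖x‖ = 1 → 0 < ψ x) →
      ∃ E F : ℝ, 0 < E ∧ 0 < F ∧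
        ∀ t ∈ X, t ≠ 0 → E * ψ t ≤ φ t ∧ φ t ≤ F * ψ t) :
    IsCompact {x : EuclideanSpace ℝ (Fin d) | x ∈ X ∧ ‖x‖ = 1} := by
  refine (isCompact_sphere 0 1).of_isClosed_subset ?_ fun x hx => by simpa using hx.2
  refine isClosed_setOf_mem_and_norm_eq_one fun y hyX hy1 => ?_
  have hS : {x | x ∈ X ∧ ‖x‖ = 1} ⊆ {x | x ≠ 0} := fun x hx =>
    ne_zero_of_norm_ne_zero (by simp [hx.2])
  obtain ⟨E, F, -, hF, hEF⟩ := hequiv (‖·‖ ^ θ) (homogeneousDistTo θ y)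
    (fun r hr x _ => norm_smul_rpow_of_nonneg hr.le x θ)
    (fun r hr x _ => homogeneousDistTo_smul_of_pos θ y hr x)
    ((continuousOn_norm_rpow θ).mono hS)
    ((continuousOn_homogeneousDistTo θ y).mono hS)
    (fun x _ hx1 => by simp [hx1])
    (fun x hxX hx1 => by
      rw [homogeneousDistTo_of_norm_eq_one θ y hx1]
      exact norm_pos_iff.2 (sub_ne_zero.2 (ne_of_mem_of_not_mem hxX hyX)))
  refine ⟨F⁻¹, inv_pos.2 hF, fun t htX ht1 => ?_⟩
  have hbound := (hEF t htX (hS ⟨htX, ht1⟩)).2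
  rw [ht1, Real.one_rpow, homogeneousDistTo_of_norm_eq_one θ y ht1] at hbound
  exact (inv_le_iff_one_le_mul₀' hF).2 hbound

theorem stmt1 (d : ℕ) (hd : 1 ≤ d) (X : Set (EuclideanSpace ℝ (Fin d)))
    (hcone : ∀ x ∈ X, ∀ r : ℝ, 0 < r → r • x ∈ X)
    (θ : ℝ) (hθ : θ ≠ 0)
    (hequiv : ∀ φ ψ : EuclideanSpace ℝ (Fin d) → ℝ,
      (∀ r : ℝ, 0 < r → ∀ x ∈ X, φ (r • x) = r ^ θ * φ x) →
      (∀ r : ℝ, 0 < r → ∀ x ∈ X, ψ (r • x) = r ^ θ * ψ x) →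
      ContinuousOn φ {x | x ∈ X ∧ ‖x‖ = 1} →
      ContinuousOn ψ {x | x ∈ X ∧ ‖x‖ = 1} →
      (∀ x ∈ X, ‖x‖ = 1 → 0 < φ x) →
      (∀ x ∈ X, ‖x‖ = 1 → 0 < ψ x) →
      ∃ E F : ℝ, 0 < E ∧ 0 < F ∧
        ∀ t ∈ X, t ≠ 0 → E * ψ t ≤ φ t ∧ φ t ≤ F * ψ t) :
    IsCompact {x : EuclideanSpace ℝ (Fin d) | x ∈ X ∧ ‖x‖ = 1} :=
  stmt1_general d X θ hequiv
end

section
/- Let ν be a finite Borel measure on ℝ^d \ {0} and let a : ℝ^d \ {0} → (0, ∞) be Borel measurable. Suppose that ∫ cos²(π p a(x) + c) dν(x) → 0 as p → +∞ along all real p, where c is a fixed real constant. Then ν = 0. -/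
open MeasureTheory Filter Real

private lemma cos_sq_key (A B : ℝ) :
    1 - |Real.cos (A - B)| ≤ Real.cos A ^ 2 + Real.cos B ^ 2 := by
  have h : Real.cos A ^ 2 + Real.cos B ^ 2
      = 1 + Real.cos (A + B) * Real.cos (A - B) := by
    rw [Real.cos_add, Real.cos_sub]
    nlinarith [Real.sin_sq_add_cos_sq A, Real.sin_sq_add_cos_sq B]
  rcases abs_cases (Real.cos (A - B)) with ⟨he, _⟩ | ⟨he, _⟩ <;> rw [he] <;>
    nlinarith [Real.neg_one_le_cos (A + B), Real.cos_le_one (A + B)]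

theorem stmt12 (d : ℕ) (ν : Measure (EuclideanSpace ℝ (Fin d))) [IsFiniteMeasure ν]
    (hν0 : ν {0} = 0)
    (a : EuclideanSpace ℝ (Fin d) → ℝ) (hameas : Measurable a)
    (hapos : ∀ x : EuclideanSpace ℝ (Fin d), x ≠ 0 → 0 < a x)
    (c : ℝ)
    (hlim : Tendsto (fun p : ℝ =>
        ∫ x, (Real.cos (π * p * a x + c)) ^ 2 ∂ν) atTop (nhds 0)) :
    ν = 0 := by
  have hint : ∀ p : ℝ, Integrable (fun x => (Real.cos (π * p * a x + c)) ^ 2) ν := by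
    intro p
    refine ⟨(((hameas.const_mul (π * p)).add_const c).cos.pow_const 2).aestronglyMeasurable, ?_⟩
    apply HasFiniteIntegral.of_bounded (C := 1)
    filter_upwards with x
    rw [Real.norm_eq_abs, abs_pow]
    nlinarith [Real.abs_cos_le_one (π * p * a x + c), abs_nonneg (Real.cos (π * p * a x + c))]
  have key : ∀ t : ℝ, ∀ᵐ x ∂ν, |Real.cos (π * t * a x)| = 1 := by
    intro t
    set g : EuclideanSpace ℝ (Fin d) → ℝ := fun x => 1 - |Real.cos (π * t * a x)| with hg
    have hgnn : ∀ x, 0 ≤ g x := fun x => by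
      simp only [hg, sub_nonneg]; exact Real.abs_cos_le_one _
    have hgint : Integrable g ν := by
      refine ⟨(measurable_const.sub ((hameas.const_mul (π * t)).cos.abs)).aestronglyMeasurable, ?_⟩
      apply HasFiniteIntegral.of_bounded (C := 1)
      filter_upwards with x
      rw [Real.norm_eq_abs, abs_of_nonneg (hgnn x)]
      have := abs_nonneg (Real.cos (π * t * a x))
      simp only [hg]; linarith
    have hIle : ∀ p : ℝ, ∫ x, g x ∂ν ≤
        (∫ x, (Real.cos (π * p * a x + c)) ^ 2 ∂ν)
          + ∫ x, (Real.cos (π * (p + t) * a x + c)) ^ 2 ∂ν := by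
      intro p
      rw [← integral_add (hint p) (hint (p + t))]
      refine integral_mono hgint ((hint p).add (hint (p + t))) ?_
      intro x
      have h := cos_sq_key (π * p * a x + c) (π * (p + t) * a x + c)
      have he : (π * p * a x + c) - (π * (p + t) * a x + c) = -(π * t * a x) := by ring
      rw [he, Real.cos_neg] at h
      simpa [hg] using h
    have hsum : Tendsto (fun p : ℝ =>
        (∫ x, (Real.cos (π * p * a x + c)) ^ 2 ∂ν)
          + ∫ x, (Real.cos (π * (p + t) * a x + c)) ^ 2 ∂ν) atTop (nhds 0) := by
      have h2 : Tendsto (fun p : ℝ =>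
          ∫ x, (Real.cos (π * (p + t) * a x + c)) ^ 2 ∂ν) atTop (nhds 0) :=
        hlim.comp (tendsto_atTop_add_const_right atTop t tendsto_id)
      simpa using hlim.add h2
    have hI0 : ∫ x, g x ∂ν ≤ 0 := ge_of_tendsto' hsum hIle
    have hIeq : ∫ x, g x ∂ν = 0 :=
      le_antisymm hI0 (integral_nonneg hgnn)
    rw [integral_eq_zero_iff_of_nonneg hgnn hgint] at hIeq
    filter_upwards [hIeq] with x hx
    have : g x = 0 := hx
    simp only [hg] at this
    linarith
  have hne : ∀ᵐ x ∂ν, x ≠ 0 := by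
    rw [ae_iff]
    convert hν0 using 2
    ext x; simp
  have hfalse : ∀ᵐ x ∂ν, False := by
    filter_upwards [key 1, key (Real.sqrt 2), hne] with x hx1 hx2 hx0
    have hax : 0 < a x := hapos x hx0
    have hsin : ∀ t : ℝ, |Real.cos (π * t * a x)| = 1 → Real.sin (π * t * a x) = 0 := by
      intro t ht
      have h1 : Real.cos (π * t * a x) ^ 2 = 1 := by
        rw [← sq_abs, ht]; norm_num
      have := Real.sin_sq_add_cos_sq (π * t * a x)
      nlinarith [this]
    obtain ⟨n, hn⟩ := Real.sin_eq_zero_iff.mp (hsin 1 hx1)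
    obtain ⟨m, hm⟩ := Real.sin_eq_zero_iff.mp (hsin (Real.sqrt 2) hx2)
    have hπ : (π : ℝ) ≠ 0 := Real.pi_ne_zero
    have hn' : (n : ℝ) = a x := by
      have : (n : ℝ) * π = π * 1 * a x := hn
      field_simp at this; linarith [mul_left_cancel₀ hπ (by linarith : π * (n : ℝ) = π * a x)]
    have hm' : (m : ℝ) = Real.sqrt 2 * a x := by
      have : (m : ℝ) * π = π * Real.sqrt 2 * a x := hm
      nlinarith [mul_left_cancel₀ hπ (by linarith : π * (m : ℝ) = π * (Real.sqrt 2 * a x))]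
    have hnne : (n : ℝ) ≠ 0 := by rw [hn']; exact ne_of_gt hax
    have hs : Real.sqrt 2 = (m : ℝ) / (n : ℝ) := by
      rw [hm', hn']
      field_simp
    exact irrational_sqrt_two ⟨(m : ℚ) / (n : ℚ), by push_cast; rw [hs]⟩
  have : ν Set.univ = 0 := by
    have := hfalse
    rw [ae_iff] at this
    simpa using this
  exact Measure.measure_univ_eq_zero.mp this
end
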